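/- (Reoptimization by elementary exchange steps) Let f : 2^E → ℕ be an integral polymatroid rank function and let every C_e : ℕ×ℕ → ℝ≥0 be regular. Let t, t' ∈ ℕ^E and d, d' ∈ ℕ with B_f(d) ≠ ∅ ≠ B_f(d'). Then for every optimal solution x of P(t,d) there exist k ≤ ‖t − t'‖ + |d − d'| and a sequence x = x⁰, x¹, …, x^k such that x^k is an optimal solution of P(t',d'), and for every l < k either x^{l+1} = x^l − χ_e + χ_g for some distinct e, g ∈ E, or x^{l+1} = x^l + χ_e for some e ∈ E, or x^{l+1} = x^l − χ_e for some e ∈ E, or x^{l+1} = x^l. -/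

import Mathlib

open Finset

/-- Indicator vector of an element. -/
def chi {E : Type*} [DecidableEq E] (e : E) : E → ℕ := fun e' => if e' = e then 1 else 0

/-- Integral polymatroid rank function: normalized, monotone, submodular. -/
def IsPolymatroidRank {E : Type*} [Fintype E] [DecidableEq E] (f : Finset E → ℕ) : Prop :=
  f ∅ = 0 ∧ (∀ U V : Finset E, U ⊆ V → f U ≤ f V) ∧
    (∀ U V : Finset E, f (U ∪ V) + f (U ∩ V) ≤ f U + f V)

/-- The integral polymatroid base polytope `B_f(d)`. -/
def Base {E : Type*} [Fintype E] (f : Finset E → ℕ) (d : ℕ) : Set (E → ℕ) :=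
  {x | (∀ U : Finset E, ∑ e ∈ U, x e ≤ f U) ∧ ∑ e, x e = d}

/-- Regularity of a parametrized cost function: the left discrete derivative
`C⁻(x;t) = C(x;t) - C(x-1;t)` (for `x ≥ 1`) satisfies both
`C⁻(x;t) ≤ C⁻(x;t+1)` and `C⁻(x;t+1) ≤ C⁻(x+1;t)`. -/
def Regular (C : ℕ → ℕ → ℝ) : Prop :=
  ∀ x t : ℕ, 1 ≤ x →
    C x t - C (x - 1) t ≤ C x (t + 1) - C (x - 1) (t + 1) ∧
    C x (t + 1) - C (x - 1) (t + 1) ≤ C (x + 1) t - C x t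

/-- The objective `Σ_{e ∈ E} C_e(x_e; t_e)` of problem `P(t,d)`. -/
def totalCost {E : Type*} [Fintype E] (C : E → ℕ → ℕ → ℝ) (t : E → ℕ) (x : E → ℕ) : ℝ :=
  ∑ e, C e (x e) (t e)

/-- An optimal solution of `P(t,d)`: minimize `Σ_e C_e(x_e;t_e)` over `B_f(d)`. -/
def IsOptimal {E : Type*} [Fintype E] (f : Finset E → ℕ) (C : E → ℕ → ℕ → ℝ)
    (t : E → ℕ) (d : ℕ) (x : E → ℕ) : Prop :=
  x ∈ Base f d ∧ ∀ y ∈ Base f d, totalCost C t x ≤ totalCost C t y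

/-- The `L1`-distance `‖u - v‖ = Σ_e |u_e - v_e|` of two vectors in `ℕ^E`. -/
def l1 {E : Type*} [Fintype E] (u v : E → ℕ) : ℕ :=
  ∑ e, ((u e : ℤ) - (v e : ℤ)).natAbs

/-!
Change the data `(t, d)` one unit at a time towards `(t', d')`; it suffices that after each unit
change some new optimum is one elementary step away from the old one. Let `x` be optimal for the
old data and `y` an optimum for the new data closest to `x` in `L1`, and compare `x + t` with
`y + t'`. If a coordinate violates the expected inequality, the simultaneous exchange property of
polymatroids yields `e ≠ g` with `x - χ_e + χ_g` and `y - χ_g + χ_e` both feasible. Regularity says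
that the marginal cost `C(a+1;τ) - C(a;τ)` is monotone in `a` and in `a + τ`, so the optimality of
`x` makes `y - χ_g + χ_e` optimal too, and it is closer to `x`. Hence `x + t ≤ y + t'` (or the
reverse) coordinatewise, which together with the change of the total forces `y` to be one
elementary step from `x`.
-/

section Vectors

variable {E : Type*} [DecidableEq E]

lemma sum_chi (g : E) (U : Finset E) : ∑ v ∈ U, chi g v = if g ∈ U then 1 else 0 :=
  Finset.sum_ite_eq' U g fun _ => 1

lemma chi_le_iff {g : E} {x : E → ℕ} : chi g ≤ x ↔ 1 ≤ x g := by
  refine ⟨fun h => by simpa [chi] using h g, fun h v => ?_⟩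
  unfold chi
  split_ifs with hv
  · exact hv ▸ h
  · exact Nat.zero_le _

def IsElementaryStep (x y : E → ℕ) : Prop :=
  (∃ e g : E, e ≠ g ∧ y = x - chi e + chi g) ∨ (∃ e : E, y = x + chi e) ∨
    (∃ e : E, y = x - chi e) ∨ y = x

lemma isElementaryStep_add_chi (x : E → ℕ) (e : E) : IsElementaryStep x (x + chi e) :=
  Or.inr (Or.inl ⟨e, rfl⟩)

lemma isElementaryStep_of_eq_add_chi {x y : E → ℕ} {e : E} (h : x = y + chi e) :
    IsElementaryStep x y :=
  Or.inr (Or.inr (Or.inl ⟨e, by rw [h, add_tsub_cancel_right]⟩))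

lemma isElementaryStep_of_add_chi_eq {x y : E → ℕ} {e g : E} (h : x + chi g = y + chi e) :
    IsElementaryStep x y := by
  by_cases heg : e = g
  · subst heg
    exact Or.inr (Or.inr (Or.inr (add_right_cancel h).symm))
  · have hxe : chi e ≤ x := chi_le_iff.2 (by have := congrFun h e; simp [chi, heg] at this; omega)
    refine Or.inl ⟨e, g, heg, ?_⟩
    rw [tsub_add_eq_add_tsub hxe, h, add_tsub_cancel_right]

lemma sum_sub_chi {x : E → ℕ} {g : E} (hg : 1 ≤ x g) (U : Finset E) :
    ∑ v ∈ U, (x - chi g) v + (if g ∈ U then 1 else 0) = ∑ v ∈ U, x v := by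
  rw [← sum_chi, ← Finset.sum_add_distrib]
  exact Finset.sum_congr rfl fun v _ => tsub_add_cancel_of_le (chi_le_iff.2 hg v)

lemma sum_sub_chi_add_chi {x : E → ℕ} {g : E} (hg : 1 ≤ x g) (e : E) (U : Finset E) :
    ∑ v ∈ U, (x - chi g + chi e) v + (if g ∈ U then 1 else 0) =
      ∑ v ∈ U, x v + if e ∈ U then 1 else 0 := by
  rw [← sum_sub_chi hg U]
  simp only [Pi.add_apply, Finset.sum_add_distrib, sum_chi]
  ring

variable [Fintype E]

lemma sum_add_chi (x : E → ℕ) (g : E) : ∑ v, (x + chi g) v = ∑ v, x v + 1 := by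
  simp only [Pi.add_apply, Finset.sum_add_distrib, sum_chi, Finset.mem_univ, if_true]

lemma exists_eq_add_chi_of_le {u v : E → ℕ} (hle : u ≤ v) (hsum : ∑ e, v e = ∑ e, u e + 1) :
    ∃ g, v = u + chi g := by
  obtain ⟨g, -, hg⟩ := Finset.exists_lt_of_sum_lt (s := Finset.univ) (f := u) (g := v) (by omega)
  refine ⟨g, (eq_of_le_of_not_lt (fun e => ?_) fun hlt => ?_).symm⟩
  · have := hle e
    simp only [Pi.add_apply, chi]
    split_ifs with he
    · exact he ▸ hg
    · omega
  · have := Fintype.sum_strictMono hlt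
    simp only [sum_add_chi] at this
    omega

omit [DecidableEq E] in
lemma eq_of_l1_eq_zero {u v : E → ℕ} (h : l1 u v = 0) : u = v := by
  funext e
  have := Finset.sum_eq_zero_iff.1 h e (Finset.mem_univ e)
  omega

lemma l1_add_chi (t t' : E → ℕ) (h : E) :
    l1 (t + chi h) t' + ((t h : ℤ) - t' h).natAbs = l1 t t' + ((t h + 1 : ℤ) - t' h).natAbs := by
  have hrest : ∑ v ∈ Finset.univ.erase h, (((t + chi h) v : ℤ) - t' v).natAbs =
      ∑ v ∈ Finset.univ.erase h, ((t v : ℤ) - t' v).natAbs :=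
    Finset.sum_congr rfl fun v hv => by simp [chi, Finset.ne_of_mem_erase hv]
  unfold l1
  rw [← Finset.sum_erase_add _ _ (Finset.mem_univ h),
    ← Finset.sum_erase_add _ _ (Finset.mem_univ h), hrest]
  simp [chi]
  omega

lemma l1_sub_chi_add_chi_lt {x y : E → ℕ} {e g : E} (hge : g ≠ e) (he : y e < x e)
    (hg : x g < y g) : l1 x (y - chi g + chi e) < l1 x y := by
  refine Finset.sum_lt_sum (fun v _ => ?_) ⟨e, Finset.mem_univ e, ?_⟩
  · simp only [Pi.add_apply, Pi.sub_apply, chi]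
    split_ifs <;> subst_vars <;> omega
  · simp only [Pi.add_apply, Pi.sub_apply, chi, if_neg hge.symm, if_true]
    omega

end Vectors

section Polymatroid

variable {E : Type*} [Fintype E] [DecidableEq E] {f : Finset E → ℕ} {x y : E → ℕ}

def InPolymatroid (f : Finset E → ℕ) (x : E → ℕ) : Prop :=
  ∀ U : Finset E, ∑ e ∈ U, x e ≤ f U

def IsTight (f : Finset E → ℕ) (x : E → ℕ) (U : Finset E) : Prop :=
  ∑ e ∈ U, x e = f U

lemma IsTight.union_inter (hf : IsPolymatroidRank f) (hx : InPolymatroid f x) {A B : Finset E}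
    (hA : IsTight f x A) (hB : IsTight f x B) : IsTight f x (A ∪ B) ∧ IsTight f x (A ∩ B) := by
  have := hf.2.2 A B
  have := hx (A ∪ B)
  have := hx (A ∩ B)
  have := Finset.sum_union_inter (s₁ := A) (s₂ := B) (f := x)
  unfold IsTight at *
  constructor <;> omega

lemma exists_maximal_isTight_not_mem (hf : IsPolymatroidRank f) (hx : InPolymatroid f x) (e : E) :
    ∃ U, IsTight f x U ∧ e ∉ U ∧ ∀ V, IsTight f x V → e ∉ V → V ⊆ U := by
  classical
  let T := Finset.univ.filter fun V => IsTight f x V ∧ e ∉ V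
  refine ⟨T.sup id, ?_, ?_, fun V hV heV => Finset.le_sup (f := id) (by simp [T, hV, heV])⟩
  · refine Finset.sup_induction (p := IsTight f x) ?_ (fun A hA B hB => ?_) fun V hV => ?_
    · simpa [IsTight] using hf.1.symm
    · exact (hA.union_inter hf hx hB).1
    · exact (Finset.mem_filter.1 hV).2.1
  · simp only [Finset.mem_sup, id]
    rintro ⟨V, hV, heV⟩
    exact (Finset.mem_filter.1 hV).2.2 heV

lemma exists_minimal_isTight_mem (hf : IsPolymatroidRank f) (hx : InPolymatroid f x) (e : E) :
    ∃ S, e ∈ S ∧ (IsTight f x S ∨ S = Finset.univ) ∧ ∀ V, e ∈ V → IsTight f x V → S ⊆ V := by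
  classical
  let T := Finset.univ.filter fun V => e ∈ V ∧ IsTight f x V
  refine ⟨T.inf id, ?_, ?_, fun V heV hV => Finset.inf_le (f := id) (by simp [T, hV, heV])⟩
  · exact Finset.singleton_subset_iff.1
      (Finset.le_inf fun V hV => Finset.singleton_subset_iff.2 (Finset.mem_filter.1 hV).2.1)
  · refine Finset.inf_induction (p := fun S => IsTight f x S ∨ S = Finset.univ) (Or.inr rfl)
      (fun A hA B hB => ?_) fun V hV => Or.inl (Finset.mem_filter.1 hV).2.2
    rcases hA with hA | rfl <;> rcases hB with hB | rfl
    · exact Or.inl (hA.union_inter hf hx hB).2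
    all_goals simp_all

omit [Fintype E] in
lemma InPolymatroid.sub_chi_add_chi (hx : InPolymatroid f x) {e g : E} (hg : 1 ≤ x g)
    (hslack : ∀ V, e ∈ V → g ∉ V → ¬ IsTight f x V) : InPolymatroid f (x - chi g + chi e) := by
  intro V
  have hsum := sum_sub_chi_add_chi hg e V
  have hxV := hx V
  by_cases heV : e ∈ V <;> by_cases hgV : g ∈ V
  all_goals simp only [heV, hgV, if_true, if_false] at hsum
  · omega
  · have := hslack V heV hgV
    unfold IsTight at this
    omega
  all_goals omega

theorem exists_simultaneous_exchange (hf : IsPolymatroidRank f) (hx : InPolymatroid f x)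
    (hy : InPolymatroid f y) {e : E} (he : y e < x e) :
    (∃ g, g ≠ e ∧ x g < y g ∧ InPolymatroid f (y - chi g + chi e) ∧
      InPolymatroid f (x - chi e + chi g)) ∨ ∑ v, y v < ∑ v, x v := by
  obtain ⟨U, hU, heU, hUmax⟩ := exists_maximal_isTight_not_mem hf hx e
  obtain ⟨S, heS, hS, hSmin⟩ := exists_minimal_isTight_mem hf hy e
  by_cases hg : ∃ g ∈ S \ U, g ≠ e ∧ x g < y g
  · obtain ⟨g, hgSU, hge, hxg⟩ := hg
    rw [Finset.mem_sdiff] at hgSU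
    refine Or.inl ⟨g, hge, hxg, hy.sub_chi_add_chi (by omega) ?_, hx.sub_chi_add_chi (by omega) ?_⟩
    · exact fun V heV hgV hV => hgV (hSmin V heV hV hgSU.1)
    · exact fun V hgV heV hV => hgSU.2 (hUmax V hV heV hgV)
  push Not at hg
  have hlt : ∑ v ∈ S \ U, y v < ∑ v ∈ S \ U, x v := by
    refine Finset.sum_lt_sum (fun v hv => ?_) ⟨e, by simp [heS, heU], he⟩
    by_cases hve : v = e
    · exact hve ▸ he.le
    · exact hg v hv hve
  have hxSU : ∑ v ∈ S \ U, x v + ∑ v ∈ U, x v = ∑ v ∈ S ∪ U, x v := by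
    rw [← Finset.sum_union Finset.sdiff_disjoint, Finset.sdiff_union_self_eq_union]
  have hySU := Finset.sum_inter_add_sum_sdiff S U y
  rcases hS with hS | rfl
  · -- submodularity at `S, U`, with `S` tight for `y` and `U` tight for `x`,
    -- gives `x(S \ U) ≤ y(S \ U)`
    have := hf.2.2 S U
    have := hx (S ∪ U)
    have := hy (S ∩ U)
    unfold IsTight at hS hU
    omega
  · have := hy U
    unfold IsTight at hU
    simp only [Finset.union_eq_left.2 (Finset.subset_univ U), Finset.univ_inter] at hxSU hySU
    omega

lemma base_nonempty_of_succ {d : ℕ} (hB : (Base f (d + 1)).Nonempty) : (Base f d).Nonempty := by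
  obtain ⟨x, hxP, hxd⟩ := hB
  obtain ⟨e, -, he⟩ := Finset.exists_ne_zero_of_sum_ne_zero (s := Finset.univ) (f := x) (by omega)
  have hsum := sum_sub_chi (x := x) (g := e) (by omega) Finset.univ
  simp only [Finset.mem_univ, if_true] at hsum
  exact ⟨x - chi e, fun U => (Finset.sum_le_sum fun v _ => tsub_le_self).trans (hxP U), by omega⟩

lemma base_nonempty_of_le {d d' : ℕ} (h : d ≤ d') (hB : (Base f d').Nonempty) :
    (Base f d).Nonempty := by
  induction h with
  | refl => exact hB
  | step _ ih => exact ih (base_nonempty_of_succ hB)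

lemma sub_chi_add_chi_mem_base {d : ℕ} (hx : x ∈ Base f d) {e g : E} (hg : 1 ≤ x g)
    (hP : InPolymatroid f (x - chi g + chi e)) : x - chi g + chi e ∈ Base f d := by
  refine ⟨hP, ?_⟩
  have := sum_sub_chi_add_chi hg e Finset.univ
  simp only [Finset.mem_univ, if_true] at this
  rw [← hx.2]
  omega

omit [DecidableEq E] in
lemma base_finite (f : Finset E → ℕ) (d : ℕ) : (Base f d).Finite := by
  refine (Set.Finite.pi fun _ : E => Set.finite_Iic d).subset fun x hx => ?_
  simp only [Set.mem_pi, Set.mem_univ, Set.mem_Iic, forall_true_left]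
  exact fun e => hx.2 ▸ Finset.single_le_sum (fun i _ => Nat.zero_le (x i)) (Finset.mem_univ e)

end Polymatroid

section Cost

/-- `marginal C a τ` is `C⁻(a+1;τ)`. -/
def marginal (C : ℕ → ℕ → ℝ) (a τ : ℕ) : ℝ := C (a + 1) τ - C a τ

namespace Regular

variable {C : ℕ → ℕ → ℝ}

lemma marginal_le_succ_param (hC : Regular C) (a τ : ℕ) :
    marginal C a τ ≤ marginal C a (τ + 1) := by
  simpa [marginal] using (hC (a + 1) τ (by omega)).1

lemma marginal_succ_param_le (hC : Regular C) (a τ : ℕ) :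
    marginal C a (τ + 1) ≤ marginal C (a + 1) τ := by
  simpa [marginal, add_assoc] using (hC (a + 1) τ (by omega)).2

lemma marginal_le_marginal (hC : Regular C) {a a' τ τ' : ℕ} (ha : a ≤ a')
    (haτ : a + τ ≤ a' + τ') : marginal C a τ ≤ marginal C a' τ' := by
  obtain ⟨n, rfl⟩ := Nat.exists_eq_add_of_le ha
  induction n generalizing τ' with
  | zero => exact monotone_nat_of_le_succ (hC.marginal_le_succ_param a) (by omega)
  | succ n ih =>
    calc marginal C a τ ≤ marginal C (a + n) (τ' + 1) := ih (by omega) (by omega)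
      _ ≤ marginal C (a + (n + 1)) τ' := hC.marginal_succ_param_le (a + n) τ'

end Regular

variable {E : Type*} [Fintype E] [DecidableEq E]

lemma totalCost_sub_chi_add_chi (C : E → ℕ → ℕ → ℝ) (t : E → ℕ) {x : E → ℕ} {e g : E}
    (heg : e ≠ g) (he : 1 ≤ x e) :
    totalCost C t (x - chi e + chi g) =
      totalCost C t x - marginal (C e) (x e - 1) (t e) + marginal (C g) (x g) (t g) := by
  have hdiff : totalCost C t (x - chi e + chi g) - totalCost C t x =
      ∑ v ∈ {e, g}, (C v ((x - chi e + chi g) v) (t v) - C v (x v) (t v)) := by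
    rw [totalCost, totalCost, ← Finset.sum_sub_distrib]
    refine (Finset.sum_subset (Finset.subset_univ _) fun v _ hv => ?_).symm
    simp only [Finset.mem_insert, Finset.mem_singleton, not_or] at hv
    simp [chi, hv.1, hv.2]
  rw [Finset.sum_pair heg] at hdiff
  simp only [Pi.add_apply, Pi.sub_apply, chi, if_neg heg, if_neg heg.symm, if_true, tsub_zero,
    add_zero] at hdiff
  simp only [marginal, Nat.sub_add_cancel he]
  linarith

omit [DecidableEq E] in
lemma exists_closest_isOptimal {f : Finset E → ℕ} {d : ℕ} (C : E → ℕ → ℕ → ℝ) (t : E → ℕ)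
    (hB : (Base f d).Nonempty) (x : E → ℕ) :
    ∃ y, IsOptimal f C t d y ∧ ∀ z, IsOptimal f C t d z → l1 x y ≤ l1 x z := by
  obtain ⟨y₀, hy₀, hy₀min⟩ := Set.exists_min_image _ (totalCost C t) (base_finite f d) hB
  have hfin : {y | IsOptimal f C t d y}.Finite := (base_finite f d).subset fun y hy => hy.1
  obtain ⟨y, hy, hymin⟩ := Set.exists_min_image _ (l1 x) hfin ⟨y₀, hy₀, hy₀min⟩
  exact ⟨y, hy, hymin⟩

end Cost

section Reoptimization

variable {E : Type*} [Fintype E] [DecidableEq E] {f : Finset E → ℕ} {C : E → ℕ → ℕ → ℝ}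
  {t t' : E → ℕ} {d d' : ℕ} {x y : E → ℕ}

lemma IsOptimal.false_of_exchange (hreg : ∀ e, Regular (C e)) (hx : IsOptimal f C t d x)
    (hy : IsOptimal f C t' d' y) (hclosest : ∀ z, IsOptimal f C t' d' z → l1 x y ≤ l1 x z)
    {e g : E} (heg : e ≠ g) (hye : y e < x e) (hxg : x g < y g)
    (he : y e + t' e < x e + t e) (hg : x g + t g < y g + t' g)
    (hxP : InPolymatroid f (x - chi e + chi g)) (hyP : InPolymatroid f (y - chi g + chi e)) :
    False := by
  have hx_le : marginal (C e) (x e - 1) (t e) ≤ marginal (C g) (x g) (t g) := by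
    have := hx.2 _ (sub_chi_add_chi_mem_base hx.1 (by omega) hxP)
    rw [totalCost_sub_chi_add_chi C t heg (by omega)] at this
    linarith
  have hme : marginal (C e) (y e) (t' e) ≤ marginal (C e) (x e - 1) (t e) :=
    (hreg e).marginal_le_marginal (by omega) (by omega)
  have hmg : marginal (C g) (x g) (t g) ≤ marginal (C g) (y g - 1) (t' g) :=
    (hreg g).marginal_le_marginal (by omega) (by omega)
  have hz : IsOptimal f C t' d' (y - chi g + chi e) := by
    refine ⟨sub_chi_add_chi_mem_base hy.1 (by omega) hyP, fun w hw => ?_⟩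
    rw [totalCost_sub_chi_add_chi C t' heg.symm (by omega)]
    linarith [hy.2 w hw]
  exact (hclosest _ hz).not_gt (l1_sub_chi_add_chi_lt heg.symm hye hxg)

lemma IsOptimal.exists_isOptimal_add_le_add_of_le (hf : IsPolymatroidRank f)
    (hreg : ∀ e, Regular (C e)) (hx : IsOptimal f C t d x) (hB : (Base f d').Nonempty)
    (hd : d ≤ d') (ht : t ≤ t') : ∃ y, IsOptimal f C t' d' y ∧ x + t ≤ y + t' := by
  obtain ⟨y, hy, hclosest⟩ := exists_closest_isOptimal C t' hB x
  refine ⟨y, hy, fun e => ?_⟩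
  by_contra! he
  simp only [Pi.add_apply] at he
  have hye : y e < x e := by have : t e ≤ t' e := ht e; omega
  rcases exists_simultaneous_exchange hf hx.1.1 hy.1.1 hye with ⟨g, hge, hxg, hyP, hxP⟩ | hsum
  · exact hx.false_of_exchange hreg hy hclosest hge.symm hye hxg he
      (by have : t g ≤ t' g := ht g; omega) hxP hyP
  · rw [hx.1.2, hy.1.2] at hsum
    omega

lemma IsOptimal.exists_isOptimal_add_le_add_of_ge (hf : IsPolymatroidRank f)
    (hreg : ∀ e, Regular (C e)) (hx : IsOptimal f C t d x) (hB : (Base f d').Nonempty)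
    (hd : d' ≤ d) (ht : t' ≤ t) : ∃ y, IsOptimal f C t' d' y ∧ y + t' ≤ x + t := by
  obtain ⟨y, hy, hclosest⟩ := exists_closest_isOptimal C t' hB x
  refine ⟨y, hy, fun g => ?_⟩
  by_contra! hg
  simp only [Pi.add_apply] at hg
  have hxg : x g < y g := by have : t' g ≤ t g := ht g; omega
  rcases exists_simultaneous_exchange hf hy.1.1 hx.1.1 hxg with ⟨e, heg, hye, hxP, hyP⟩ | hsum
  · exact hx.false_of_exchange hreg hy hclosest heg hye hxg
      (by have : t' e ≤ t e := ht e; omega) hg hxP hyP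
  · rw [hx.1.2, hy.1.2] at hsum
    omega

variable (hf : IsPolymatroidRank f) (hreg : ∀ e, Regular (C e))
include hf hreg

lemma IsOptimal.exists_step_succ (hx : IsOptimal f C t d x) (hB : (Base f (d + 1)).Nonempty) :
    ∃ y, IsOptimal f C t (d + 1) y ∧ IsElementaryStep x y := by
  obtain ⟨y, hy, hle⟩ := hx.exists_isOptimal_add_le_add_of_le hf hreg hB d.le_succ le_rfl
  obtain ⟨g, rfl⟩ := exists_eq_add_chi_of_le (le_of_add_le_add_right hle) (by rw [hy.1.2, hx.1.2])
  exact ⟨_, hy, isElementaryStep_add_chi x g⟩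

lemma IsOptimal.exists_step_pred (hx : IsOptimal f C t (d + 1) x) :
    ∃ y, IsOptimal f C t d y ∧ IsElementaryStep x y := by
  obtain ⟨y, hy, hle⟩ := hx.exists_isOptimal_add_le_add_of_ge hf hreg
    (base_nonempty_of_succ ⟨x, hx.1⟩) d.le_succ le_rfl
  obtain ⟨e, he⟩ := exists_eq_add_chi_of_le (le_of_add_le_add_right hle) (by rw [hy.1.2, hx.1.2])
  exact ⟨y, hy, isElementaryStep_of_eq_add_chi he⟩

lemma IsOptimal.exists_step_add_chi (hx : IsOptimal f C t d x) (h : E) :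
    ∃ y, IsOptimal f C (t + chi h) d y ∧ IsElementaryStep x y := by
  obtain ⟨y, hy, hle⟩ := hx.exists_isOptimal_add_le_add_of_le hf hreg ⟨x, hx.1⟩ le_rfl
    le_self_add
  rw [← add_assoc, add_right_comm] at hle
  obtain ⟨g, hg⟩ := exists_eq_add_chi_of_le (le_of_add_le_add_right hle)
    (by rw [sum_add_chi, hy.1.2, hx.1.2])
  exact ⟨y, hy, isElementaryStep_of_add_chi_eq hg.symm⟩

lemma IsOptimal.exists_step_of_add_chi {h : E} (hx : IsOptimal f C (t + chi h) d x) :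
    ∃ y, IsOptimal f C t d y ∧ IsElementaryStep x y := by
  obtain ⟨y, hy, hle⟩ := hx.exists_isOptimal_add_le_add_of_ge hf hreg ⟨x, hx.1⟩ le_rfl
    le_self_add
  rw [← add_assoc, add_right_comm x] at hle
  obtain ⟨e, he⟩ := exists_eq_add_chi_of_le (le_of_add_le_add_right hle)
    (by rw [sum_add_chi, hy.1.2, hx.1.2])
  exact ⟨y, hy, isElementaryStep_of_add_chi_eq he⟩

end Reoptimization

lemma exists_seq_cons {α : Type*} {r : α → α → Prop} {P : α → Prop} {a b : α} {n : ℕ}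
    (hab : r a b) (h : ∃ seq : ℕ → α, seq 0 = b ∧ P (seq n) ∧ ∀ l < n, r (seq l) (seq (l + 1))) :
    ∃ seq : ℕ → α, seq 0 = a ∧ P (seq (n + 1)) ∧ ∀ l < n + 1, r (seq l) (seq (l + 1)) := by
  obtain ⟨seq, h0, hP, hr⟩ := h
  refine ⟨fun | 0 => a | l + 1 => seq l, rfl, hP, fun l hl => ?_⟩
  cases l with
  | zero => simpa [h0] using hab
  | succ l => exact hr l (by omega)

section Chain

variable {E : Type*} [Fintype E] [DecidableEq E] {f : Finset E → ℕ} {C : E → ℕ → ℕ → ℝ}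
  {t' : E → ℕ} {d' : ℕ}

lemma IsOptimal.exists_step_toward (hf : IsPolymatroidRank f) (hreg : ∀ e, Regular (C e))
    (hB' : (Base f d').Nonempty) {t : E → ℕ} {d : ℕ} {x : E → ℕ} (hx : IsOptimal f C t d x)
    (hne : l1 t t' + ((d : ℤ) - d').natAbs ≠ 0) :
    ∃ t₁ d₁ x₁, IsOptimal f C t₁ d₁ x₁ ∧ IsElementaryStep x x₁ ∧
      l1 t₁ t' + ((d₁ : ℤ) - d').natAbs + 1 = l1 t t' + ((d : ℤ) - d').natAbs := by
  rcases lt_trichotomy d d' with hd | rfl | hd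
  · obtain ⟨y, hy, hxy⟩ := hx.exists_step_succ hf hreg (base_nonempty_of_le hd hB')
    exact ⟨t, d + 1, y, hy, hxy, by omega⟩
  · obtain ⟨h, hh⟩ := Function.ne_iff.1 fun ht : t = t' => hne (by simp [ht, l1])
    rcases Nat.lt_or_gt_of_ne hh with hlt | hgt
    · obtain ⟨y, hy, hxy⟩ := hx.exists_step_add_chi hf hreg h
      exact ⟨t + chi h, d, y, hy, hxy, by have := l1_add_chi t t' h; omega⟩
    · obtain ⟨s, rfl⟩ : ∃ s, t = s + chi h :=
        ⟨t - chi h, (tsub_add_cancel_of_le (chi_le_iff.2 (by omega))).symm⟩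
      obtain ⟨y, hy, hxy⟩ := hx.exists_step_of_add_chi hf hreg
      simp only [Pi.add_apply, chi, if_true] at hgt
      exact ⟨s, d, y, hy, hxy, by have := l1_add_chi s t' h; omega⟩
  · obtain ⟨d₀, rfl⟩ : ∃ d₀, d = d₀ + 1 := ⟨d - 1, by omega⟩
    obtain ⟨y, hy, hxy⟩ := hx.exists_step_pred hf hreg
    exact ⟨t, d₀, y, hy, hxy, by omega⟩

lemma exists_elementaryStep_seq (hf : IsPolymatroidRank f) (hreg : ∀ e, Regular (C e))
    (hB' : (Base f d').Nonempty) (n : ℕ) :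
    ∀ t d x, IsOptimal f C t d x → l1 t t' + ((d : ℤ) - d').natAbs = n →
      ∃ seq : ℕ → E → ℕ, seq 0 = x ∧ IsOptimal f C t' d' (seq n) ∧
        ∀ l < n, IsElementaryStep (seq l) (seq (l + 1)) := by
  induction n with
  | zero =>
    intro t d x hx hn
    obtain rfl : t = t' := eq_of_l1_eq_zero (by omega)
    obtain rfl : d = d' := by omega
    exact ⟨fun _ => x, rfl, hx, fun l hl => absurd hl l.not_lt_zero⟩
  | succ n ih =>
    intro t d x hx hn
    obtain ⟨t₁, d₁, x₁, hx₁, hstep, hmeas⟩ :=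
      hx.exists_step_toward (t' := t') hf hreg hB' (by omega)
    have hn₁ : l1 t₁ t' + ((d₁ : ℤ) - d').natAbs = n := by omega
    exact exists_seq_cons hstep (ih t₁ d₁ x₁ hx₁ hn₁)

end Chain

theorem reoptimization_elementary_steps_general {E : Type*} [Fintype E] [DecidableEq E]
    (f : Finset E → ℕ) (hf : IsPolymatroidRank f)
    (C : E → ℕ → ℕ → ℝ)
    (hreg : ∀ e, Regular (C e))
    (t t' : E → ℕ) (d d' : ℕ)
    (hBd' : (Base f d').Nonempty)
    (x : E → ℕ) (hx : IsOptimal f C t d x) :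
    ∃ (k : ℕ) (seq : ℕ → (E → ℕ)),
      k ≤ l1 t t' + ((d : ℤ) - (d' : ℤ)).natAbs ∧
      seq 0 = x ∧
      IsOptimal f C t' d' (seq k) ∧
      ∀ l < k,
        (∃ e g : E, e ≠ g ∧ seq (l + 1) = seq l - chi e + chi g) ∨
        (∃ e : E, seq (l + 1) = seq l + chi e) ∨
        (∃ e : E, seq (l + 1) = seq l - chi e) ∨
        seq (l + 1) = seq l := by
  obtain ⟨seq, h0, hopt, hsteps⟩ := exists_elementaryStep_seq hf hreg hBd' _ t d x hx rfl
  exact ⟨_, seq, le_rfl, h0, hopt, hsteps⟩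

/-- **Reoptimization by elementary exchange steps.** Let `f` be an integral polymatroid rank
function and all `C_e` nonnegative and regular. For `t, t' ∈ ℕ^E` and `d, d' ∈ ℕ` with
`B_f(d) ≠ ∅ ≠ B_f(d')`, for every optimal solution `x` of `P(t,d)` there exist
`k ≤ ‖t - t'‖ + |d - d'|` and a sequence `x = x⁰, x¹, …, x^k` such that `x^k` is an optimal
solution of `P(t',d')` and each step is an elementary exchange: shifting one unit between two
elements, adding one unit, removing one unit, or doing nothing. -/
theorem reoptimization_elementary_steps {E : Type*} [Fintype E] [DecidableEq E] [Nonempty E]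
    (f : Finset E → ℕ) (hf : IsPolymatroidRank f)
    (C : E → ℕ → ℕ → ℝ) (hC0 : ∀ e x t, 0 ≤ C e x t)
    (hreg : ∀ e, Regular (C e))
    (t t' : E → ℕ) (d d' : ℕ)
    (hBd : (Base f d).Nonempty) (hBd' : (Base f d').Nonempty)
    (x : E → ℕ) (hx : IsOptimal f C t d x) :
    ∃ (k : ℕ) (seq : ℕ → (E → ℕ)),
      k ≤ l1 t t' + ((d : ℤ) - (d' : ℤ)).natAbs ∧
      seq 0 = x ∧
      IsOptimal f C t' d' (seq k) ∧
      ∀ l < k,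
        (∃ e g : E, e ≠ g ∧ seq (l + 1) = seq l - chi e + chi g) ∨
        (∃ e : E, seq (l + 1) = seq l + chi e) ∨
        (∃ e : E, seq (l + 1) = seq l - chi e) ∨
        seq (l + 1) = seq l :=
  reoptimization_elementary_steps_general f hf C hreg t t' d d' hBd' x hx
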